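/- arXiv:2304.06610 — 5 statements merged into one kernel-verified Lean document; each statement's English description precedes it below -/
import Mathlib

section
/- Let f=(f_1,…,f_n) and g=(g_1,…,g_n) be multigerms of continuous functions (ℝ²,0)→(ℝ,0) that are multi-𝒦-Lipschitz equivalent via a bi-Lipschitz homeomorphism germ H with common factor h. Then for each index j there exists a sign ε_j ∈ {−1,+1} such that for all p in a sufficiently small neighborhood of 0 in ℝ², the numbers g_j(h(p)) and ε_j·f_j(p) have the same sign (both positive, both negative, or both zero). -/
/-- A germ at 0 of a bi-Lipschitz homeomorphism of `(E,0)`: a map `h` defined on a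
neighborhood `U` of `0` with `h 0 = 0` mapping `U` bijectively onto a neighborhood `V`
of `0`, with bi-Lipschitz constant `C ≥ 1`. -/
def IsBiLipGermAt0 {E : Type*} [NormedAddCommGroup E] (h : E → E)
    (U V : Set E) (C : ℝ) : Prop :=
  U ∈ nhds (0 : E) ∧ V ∈ nhds (0 : E) ∧ h 0 = 0 ∧ Set.BijOn h U V ∧ 1 ≤ C ∧
    ∀ p ∈ U, ∀ q ∈ U,
      (1 / C) * ‖p - q‖ ≤ ‖h p - h q‖ ∧ ‖h p - h q‖ ≤ C * ‖p - q‖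

/-- If `f` and `g` are multi-𝒦-Lipschitz equivalent via `H` with common factor
`h`, then for each `j` there is a sign `ε_j ∈ {−1,+1}` such that for all `p` near `0`,
`g_j(h(p))` and `ε_j · f_j(p)` have the same sign (both positive, both negative, or both
zero). -/
theorem stmt3 (n : ℕ) (f g : Fin n → ℝ × ℝ → ℝ)
    (hfc : ∀ j, ∃ U ∈ nhds (0 : ℝ × ℝ), ContinuousOn (f j) U)
    (hgc : ∀ j, ∃ U ∈ nhds (0 : ℝ × ℝ), ContinuousOn (g j) U)
    (hf0 : ∀ j, f j 0 = 0) (hg0 : ∀ j, g j 0 = 0)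
    (h : ℝ × ℝ → ℝ × ℝ) (Ht : Fin n → ℝ × ℝ → ℝ → ℝ)
    (U V : Set (ℝ × ℝ)) (C₀ : ℝ)
    (W X : Set ((ℝ × ℝ) × (Fin n → ℝ))) (C : ℝ)
    (hh : IsBiLipGermAt0 h U V C₀)
    (hH : IsBiLipGermAt0
      (fun q : (ℝ × ℝ) × (Fin n → ℝ) => (h q.1, fun j => Ht j q.1 (q.2 j))) W X C)
    (hzero : ∀ᶠ p in nhds (0 : ℝ × ℝ), ∀ j, Ht j p 0 = 0)
    (heq : ∀ᶠ p in nhds (0 : ℝ × ℝ), ∀ j, Ht j p (f j p) = g j (h p)) :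
    ∀ j, ∃ ε : ℝ, (ε = 1 ∨ ε = -1) ∧
      ∀ᶠ p in nhds (0 : ℝ × ℝ),
        Real.sign (g j (h p)) = Real.sign (ε * f j p) := by
  intro j
  classical
  obtain ⟨hW, -, -, -, hC1, hlip⟩ := hH
  have hC0 : (0:ℝ) < C := lt_of_lt_of_le one_pos hC1
  obtain ⟨r, hr0, hrW⟩ := Metric.mem_nhds_iff.mp hW
  obtain ⟨s, hs0, hsP⟩ := Metric.eventually_nhds_iff.mp hzero
  set δ : ℝ := r / 2 with hδdef
  have hδ0 : 0 < δ := by positivity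
  have hδr : δ < r := by simp only [hδdef]; linarith
  -- single subtraction
  have hsingle : ∀ a b : ℝ, (Pi.single j a : Fin n → ℝ) - Pi.single j b = Pi.single j (a - b) := by
    intro a b
    funext i
    rcases eq_or_ne i j with rfl | hne
    · simp
    · simp [Pi.single_eq_of_ne hne]
  -- membership in W
  have hmem : ∀ (p : ℝ × ℝ) (a : ℝ), ‖p‖ ≤ δ → |a| ≤ δ →
      ((p, Pi.single j a) : (ℝ × ℝ) × (Fin n → ℝ)) ∈ W := by
    intro p a hp ha
    apply hrW
    rw [Metric.mem_ball, dist_zero_right, Prod.norm_def]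
    have h1 : ‖(Pi.single j a : Fin n → ℝ)‖ = |a| := by
      rw [Pi.norm_single, Real.norm_eq_abs]
    exact lt_of_le_of_lt (max_le hp (h1 ▸ ha)) hδr
  -- joint Lipschitz upper bound
  have L1 : ∀ (p : ℝ × ℝ) (a : ℝ) (q : ℝ × ℝ) (b : ℝ), ‖p‖ ≤ δ → |a| ≤ δ → ‖q‖ ≤ δ → |b| ≤ δ →
      |Ht j p a - Ht j q b| ≤ C * max ‖p - q‖ |a - b| := by
    intro p a q b hp ha hq hb
    have key := (hlip _ (hmem p a hp ha) _ (hmem q b hq hb)).2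
    have h2 : |Ht j p a - Ht j q b| ≤
        ‖((h p, fun i => Ht i p ((Pi.single j a : Fin n → ℝ) i)) - (h q, fun i => Ht i q ((Pi.single j b : Fin n → ℝ) i)) :
          (ℝ × ℝ) × (Fin n → ℝ))‖ := by
      have h3 := norm_le_pi_norm
        ((fun i => Ht i p ((Pi.single j a : Fin n → ℝ) i)) - (fun i => Ht i q ((Pi.single j b : Fin n → ℝ) i))) j
      have h4 : ((fun i => Ht i p ((Pi.single j a : Fin n → ℝ) i)) - (fun i => Ht i q ((Pi.single j b : Fin n → ℝ) i))) j
          = Ht j p a - Ht j q b := by simp [Pi.single_eq_same]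
      rw [h4, Real.norm_eq_abs] at h3
      refine h3.trans ?_
      exact norm_snd_le (((h p, fun i => Ht i p ((Pi.single j a : Fin n → ℝ) i)) - (h q, fun i => Ht i q ((Pi.single j b : Fin n → ℝ) i)) : (ℝ × ℝ) × (Fin n → ℝ)))
    refine h2.trans (key.trans (le_of_eq ?_))
    congr 1
    rw [Prod.norm_def]
    simp only [Prod.fst_sub, Prod.snd_sub]
    rw [hsingle, Pi.norm_single, Real.norm_eq_abs]
  -- lower bound, same p
  have L2 : ∀ (p : ℝ × ℝ) (a b : ℝ), ‖p‖ ≤ δ → |a| ≤ δ → |b| ≤ δ →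
      (1 / C) * |a - b| ≤ |Ht j p a - Ht j p b| := by
    intro p a b hp ha hb
    have key := (hlip _ (hmem p a hp ha) _ (hmem p b hp hb)).1
    have hfun : ((fun i => Ht i p ((Pi.single j a : Fin n → ℝ) i)) - (fun i => Ht i p ((Pi.single j b : Fin n → ℝ) i)) :
        Fin n → ℝ) = Pi.single j (Ht j p a - Ht j p b) := by
      funext i
      rcases eq_or_ne i j with rfl | hne
      · simp [Pi.single_eq_same]
      · simp [Pi.single_eq_of_ne hne]
    have hl : ‖((p, Pi.single j a) - (p, Pi.single j b) : (ℝ × ℝ) × (Fin n → ℝ))‖ = |a - b| := by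
      rw [Prod.norm_def]
      simp only [Prod.fst_sub, Prod.snd_sub, sub_self, norm_zero]
      rw [hsingle, Pi.norm_single, Real.norm_eq_abs]
      exact max_eq_right (abs_nonneg _)
    have hr' : ‖((h p, fun i => Ht i p ((Pi.single j a : Fin n → ℝ) i)) -
        (h p, fun i => Ht i p ((Pi.single j b : Fin n → ℝ) i)) : (ℝ × ℝ) × (Fin n → ℝ))‖
        = |Ht j p a - Ht j p b| := by
      rw [Prod.norm_def]
      simp only [Prod.fst_sub, Prod.snd_sub, sub_self, norm_zero]
      rw [hfun, Pi.norm_single, Real.norm_eq_abs]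
      exact max_eq_right (abs_nonneg _)
    calc (1 / C) * |a - b|
        = (1 / C) * ‖((p, Pi.single j a) - (p, Pi.single j b) : (ℝ × ℝ) × (Fin n → ℝ))‖ := by
          rw [hl]
      _ ≤ _ := key
      _ = |Ht j p a - Ht j p b| := hr'
  -- injectivity in a
  have hinj : ∀ p : ℝ × ℝ, ‖p‖ ≤ δ → Set.InjOn (Ht j p) (Set.Icc (-δ) δ) := by
    intro p hp a ha b hb hab
    have h2 := L2 p a b hp (abs_le.mpr ⟨ha.1, ha.2⟩) (abs_le.mpr ⟨hb.1, hb.2⟩)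
    rw [hab, sub_self, abs_zero] at h2
    have h3 : 0 < 1 / C := by positivity
    have h4 : |a - b| ≤ 0 := by nlinarith [abs_nonneg (a - b)]
    have := abs_nonneg (a - b)
    have : |a - b| = 0 := le_antisymm h4 this
    have := abs_eq_zero.mp this
    linarith [sub_eq_zero.mp this]
  -- continuity in a
  have hcont : ∀ p : ℝ × ℝ, ‖p‖ ≤ δ → ContinuousOn (Ht j p) (Set.Icc (-δ) δ) := by
    intro p hp
    refine LipschitzOnWith.continuousOn (K := C.toNNReal) ?_
    rw [lipschitzOnWith_iff_dist_le_mul]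
    intro a ha b hb
    rw [Real.dist_eq, Real.dist_eq, Real.coe_toNNReal _ hC0.le]
    have := L1 p a p b hp (abs_le.mpr ⟨ha.1, ha.2⟩) hp (abs_le.mpr ⟨hb.1, hb.2⟩)
    rwa [sub_self, norm_zero, max_eq_right (abs_nonneg _)] at this
  -- nonvanishing
  have hnz : ∀ (p : ℝ × ℝ) (a : ℝ), ‖p‖ ≤ δ → dist p 0 < s → a ≠ 0 → |a| ≤ δ →
      Ht j p a ≠ 0 := by
    intro p a hp hps ha haδ
    have h0 : Ht j p 0 = 0 := hsP hps j
    have h2 := L2 p a 0 hp haδ (by simp [hδ0.le])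
    rw [h0, sub_zero, sub_zero] at h2
    have h3 : 0 < |a| := abs_pos.mpr ha
    have h4 : 0 < 1 / C := by positivity
    intro hz
    rw [hz, abs_zero] at h2
    nlinarith
  -- connected argument
  set ρ : ℝ := min δ s with hρdef
  have hρ0 : 0 < ρ := lt_min hδ0 hs0
  set S : Set ((ℝ × ℝ) × ℝ) := Metric.ball (0 : ℝ × ℝ) ρ ×ˢ Set.Ioo (0 : ℝ) δ with hSdef
  have hmemS : ∀ x : (ℝ × ℝ) × ℝ, x ∈ S → ‖x.1‖ ≤ δ ∧ dist x.1 0 < s ∧ x.2 ≠ 0 ∧ |x.2| ≤ δ := by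
    intro x hx
    obtain ⟨hx1, hx2⟩ := hx
    rw [Metric.mem_ball, dist_zero_right] at hx1
    refine ⟨le_of_lt (lt_of_lt_of_le hx1 (min_le_left _ _)), ?_, ne_of_gt hx2.1, ?_⟩
    · rw [dist_zero_right]; exact lt_of_lt_of_le hx1 (min_le_right _ _)
    · rw [abs_of_pos hx2.1]; exact hx2.2.le
  have hScon : IsPreconnected S :=
    ((convex_ball (0 : ℝ × ℝ) ρ).prod (convex_Ioo 0 δ)).isPreconnected
  have hΦcont : ContinuousOn (fun x : (ℝ × ℝ) × ℝ => Ht j x.1 x.2) S := by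
    refine LipschitzOnWith.continuousOn (K := C.toNNReal) ?_
    rw [lipschitzOnWith_iff_dist_le_mul]
    intro x hx y hy
    obtain ⟨hx1, -, -, hx2⟩ := hmemS x hx
    obtain ⟨hy1, -, -, hy2⟩ := hmemS y hy
    rw [Real.dist_eq, Real.coe_toNNReal _ hC0.le, Prod.dist_eq, Real.dist_eq, dist_eq_norm]
    exact L1 x.1 x.2 y.1 y.2 hx1 hx2 hy1 hy2
  have himg : IsPreconnected ((fun x : (ℝ × ℝ) × ℝ => Ht j x.1 x.2) '' S) :=
    hScon.image _ hΦcont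
  have h0not : (0 : ℝ) ∉ (fun x : (ℝ × ℝ) × ℝ => Ht j x.1 x.2) '' S := by
    rintro ⟨x, hx, hx0⟩
    obtain ⟨h1, h2, h3, h4⟩ := hmemS x hx
    exact hnz x.1 x.2 h1 h2 h3 h4 hx0
  have hsame : ∀ x ∈ (fun x : (ℝ × ℝ) × ℝ => Ht j x.1 x.2) '' S,
      ∀ y ∈ (fun x : (ℝ × ℝ) × ℝ => Ht j x.1 x.2) '' S, Real.sign x = Real.sign y := by
    have hOrd := himg.ordConnected
    intro x hx y hy
    have hx0 : x ≠ 0 := fun hc => h0not (hc ▸ hx)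
    have hy0 : y ≠ 0 := fun hc => h0not (hc ▸ hy)
    rcases hx0.lt_or_gt with hxn | hxp
    · rcases hy0.lt_or_gt with hyn | hyp
      · rw [Real.sign_of_neg hxn, Real.sign_of_neg hyn]
      · exact absurd (hOrd.out hx hy ⟨hxn.le, hyp.le⟩) h0not
    · rcases hy0.lt_or_gt with hyn | hyp
      · exact absurd (hOrd.out hy hx ⟨hyn.le, hxp.le⟩) h0not
      · rw [Real.sign_of_pos hxp, Real.sign_of_pos hyp]
  -- define epsilon
  set t : ℝ := δ / 2 with htdef
  have ht : t ∈ Set.Ioo (0 : ℝ) δ := ⟨by positivity, by simp only [htdef]; linarith⟩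
  have hmem0t : ((0 : ℝ × ℝ), t) ∈ S := ⟨Metric.mem_ball_self hρ0, ht⟩
  set ε : ℝ := Real.sign (Ht j 0 t) with hεdef
  have hε : ε = 1 ∨ ε = -1 := by
    have hne : Ht j 0 t ≠ 0 :=
      hnz 0 t (by simp [hδ0.le]) (by simpa using hs0) (ne_of_gt ht.1) (by rw [abs_of_pos ht.1]; exact ht.2.le)
    rcases hne.lt_or_gt with h1 | h1
    · right; rw [hεdef, Real.sign_of_neg h1]
    · left; rw [hεdef, Real.sign_of_pos h1]
  refine ⟨ε, hε, ?_⟩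
  -- main pointwise claim
  have main : ∀ p : ℝ × ℝ, ‖p‖ < ρ → ∀ a : ℝ, |a| ≤ δ →
      Real.sign (Ht j p a) = ε * Real.sign a := by
    intro p hpρ a haδ
    have hpδ : ‖p‖ ≤ δ := le_of_lt (lt_of_lt_of_le hpρ (min_le_left _ _))
    have hps : dist p 0 < s := by
      rw [dist_zero_right]; exact lt_of_lt_of_le hpρ (min_le_right _ _)
    have h0 : Ht j p 0 = 0 := hsP hps j
    have hmemI : ∀ b : ℝ, |b| ≤ δ → b ∈ Set.Icc (-δ) δ := fun b hb => by
      rw [abs_le] at hb; exact ⟨hb.1, hb.2⟩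
    have h0I : (0 : ℝ) ∈ Set.Icc (-δ) δ := hmemI 0 (by simp [hδ0.le])
    have htI : t ∈ Set.Icc (-δ) δ := hmemI t (by rw [abs_of_pos ht.1]; exact ht.2.le)
    have haI : a ∈ Set.Icc (-δ) δ := hmemI a haδ
    have hpt : Real.sign (Ht j p t) = ε := by
      rw [hεdef]
      exact hsame _ ⟨(p, t), ⟨by rwa [Metric.mem_ball, dist_zero_right], ht⟩, rfl⟩
        _ ⟨((0 : ℝ × ℝ), t), hmem0t, rfl⟩
    rcases ContinuousOn.strictMonoOn_of_injOn_Icc' (by linarith : -δ ≤ δ)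
        (hcont p hpδ) (hinj p hpδ) with hm | hm
    · have hεp : ε = 1 := by
        rw [← hpt, Real.sign_of_pos]
        have := hm h0I htI ht.1
        rwa [h0] at this
      rcases lt_trichotomy a 0 with hlt | heq0 | hgt
      · have := hm haI h0I hlt
        rw [h0] at this
        rw [Real.sign_of_neg this, Real.sign_of_neg hlt, hεp]; ring
      · rw [heq0, Real.sign_zero, mul_zero, h0, Real.sign_zero]
      · have := hm h0I haI hgt
        rw [h0] at this
        rw [Real.sign_of_pos this, Real.sign_of_pos hgt, hεp]; ring
    · have hεp : ε = -1 := by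
        rw [← hpt, Real.sign_of_neg]
        have := hm h0I htI ht.1
        rwa [h0] at this
      rcases lt_trichotomy a 0 with hlt | heq0 | hgt
      · have := hm haI h0I hlt
        rw [h0] at this
        rw [Real.sign_of_pos this, Real.sign_of_neg hlt, hεp]; ring
      · rw [heq0, Real.sign_zero, mul_zero, h0, Real.sign_zero]
      · have := hm h0I haI hgt
        rw [h0] at this
        rw [Real.sign_of_neg this, Real.sign_of_pos hgt, hεp]; ring
  -- continuity of f j at 0
  obtain ⟨Uf, hUf, hfcont⟩ := hfc j
  have hfa : ContinuousAt (f j) 0 := hfcont.continuousAt hUf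
  have hT : Filter.Tendsto (f j) (nhds 0) (nhds 0) := by
    have := hfa.tendsto
    rwa [hf0 j] at this
  have hpre : f j ⁻¹' (Metric.closedBall 0 δ) ∈ nhds (0 : ℝ × ℝ) :=
    hT (Metric.closedBall_mem_nhds _ hδ0)
  have hev1 : ∀ᶠ p in nhds (0 : ℝ × ℝ), |f j p| ≤ δ := by
    filter_upwards [hpre] with p hp
    rw [Set.mem_preimage, Metric.mem_closedBall, Real.dist_eq, sub_zero] at hp
    exact hp
  have hev2 : ∀ᶠ p in nhds (0 : ℝ × ℝ), ‖p‖ < ρ := by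
    have : Metric.ball (0 : ℝ × ℝ) ρ ∈ nhds (0 : ℝ × ℝ) := Metric.ball_mem_nhds _ hρ0
    refine Filter.mem_of_superset this ?_
    intro x hx
    rwa [Metric.mem_ball, dist_zero_right] at hx
  filter_upwards [hev1, hev2, heq] with p h1 h2 h3
  rw [← h3 j, main p h2 (f j p) h1]
  rcases hε with hε1 | hε1 <;> rw [hε1]
  · rw [one_mul, one_mul]
  · rw [neg_one_mul, neg_one_mul, Real.sign_neg]
end

section
/- Let f=(f_1,…,f_n) and g=(g_1,…,g_n) be multigerms of Lipschitz functions (ℝ²,0)→(ℝ,0) with f_j(0)=g_j(0)=0 for all j. Suppose there exist a germ at 0 of a bi-Lipschitz homeomorphism h of (ℝ²,0) and a constant C ≥ 1 such that for each j and all p near 0: f_j(p)·g_j(h(p)) ≥ 0 and (1/C)·|f_j(p)| ≤ |g_j(h(p))| ≤ C·|f_j(p)|. Then f and g are multi-𝒦-Lipschitz equivalent with common factor h; in particular, there exist maps H̃_j with H̃_j(p,0)=0 such that H(p,y_1,…,y_n)=(h(p),H̃_1(p,y_1),…,H̃_n(p,y_n)) is a germ at 0 of a bi-Lipschitz homeomorphism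 of (ℝ²×ℝⁿ,0) satisfying H(p,f_1(p),…,f_n(p))=(h(p),g_1(h(p)),…,g_n(h(p))) for all p near 0. -/
open Filter Set

set_option maxHeartbeats 1000000

noncomputable def mclamp (a y : ℝ) : ℝ :=
  if 0 ≤ a then max 0 (min a y) else min 0 (max a y)

lemma mclamp_zero (a : ℝ) : mclamp a 0 = 0 := by
  unfold mclamp; split_ifs with h
  · simp [min_eq_right h]
  · simp [max_eq_right (le_of_lt (not_le.mp h))]

lemma mclamp_self (a : ℝ) : mclamp a a = a := by
  unfold mclamp; split_ifs with h
  · simp [min_self, max_eq_right h]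
  · simp [max_self, min_eq_right (le_of_lt (not_le.mp h))]

lemma mclamp_abs_le (a y : ℝ) : |mclamp a y| ≤ |a| := by
  rcases abs_cases a with ⟨h1, h2⟩ | ⟨h1, h2⟩ <;> rw [h1, abs_le] <;>
    unfold mclamp <;> split_ifs with h <;>
    simp only [min_def, max_def] <;> split_ifs <;> constructor <;> linarith

lemma mclamp_lip_y (a y y' : ℝ) : |mclamp a y - mclamp a y'| ≤ |y - y'| := by
  rcases abs_cases (y - y') with ⟨h1, h2⟩ | ⟨h1, h2⟩ <;> rw [h1, abs_le] <;>
    unfold mclamp <;> split_ifs with h <;>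
    simp only [min_def, max_def] <;> split_ifs <;> constructor <;> linarith

lemma mclamp_mono (a y y' : ℝ) : 0 ≤ (mclamp a y - mclamp a y') * (y - y') := by
  unfold mclamp; split_ifs with h <;>
    simp only [min_def, max_def] <;> split_ifs <;> nlinarith

lemma mclamp_lip_a (a a' y : ℝ) : |mclamp a y - mclamp a' y| ≤ |a - a'| := by
  rcases abs_cases (a - a') with ⟨h1, h2⟩ | ⟨h1, h2⟩ <;> rw [h1, abs_le] <;>
    unfold mclamp <;> split_ifs <;>
    simp only [min_def, max_def] <;> split_ifs <;> constructor <;> linarith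

lemma mclamp_cont (a : ℝ) : Continuous (fun y => mclamp a y) := by
  by_cases h : 0 ≤ a <;> simp only [mclamp, h, if_true, if_false]
  · exact continuous_const.max (continuous_const.min continuous_id)
  · exact continuous_const.min (continuous_const.max continuous_id)

lemma fiber_aux {C r d D : ℝ} (hC : 1 ≤ C) (hr1 : 1/C ≤ r) (hr2 : r ≤ C)
    (hD : 0 ≤ D) (hd0 : 0 ≤ d) (hdD : d ≤ D) :
    (1/C) * D ≤ D + (r-1)*d ∧ D + (r-1)*d ≤ C * D ∧ 0 ≤ D + (r-1)*d := by
  have hC0 : (0:ℝ) < C := by linarith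
  have hCr : 1 ≤ r * C := by
    have := (div_le_iff₀ hC0).mp hr1
    linarith
  have hCinv : (1:ℝ)/C ≤ 1 := by rw [div_le_one hC0]; exact hC
  refine ⟨?_, ?_, ?_⟩
  · rw [div_mul_eq_mul_div, div_le_iff₀ hC0]
    nlinarith
  · nlinarith
  · nlinarith

lemma fiber_bounds {C r d D : ℝ} (hC : 1 ≤ C) (hr1 : 1/C ≤ r) (hr2 : r ≤ C)
    (hd0 : 0 ≤ d * D) (hd1 : |d| ≤ |D|) :
    (1/C) * |D| ≤ |D + (r-1)*d| ∧ |D + (r-1)*d| ≤ C * |D| := by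
  have hC0 : (0:ℝ) < C := by linarith
  rcases le_total 0 D with hD | hD
  · have habsD : |D| = D := abs_of_nonneg hD
    have hdle : d ≤ D := le_trans (le_abs_self d) (by rw [habsD] at hd1; exact hd1)
    have hdge : -D ≤ d := by
      have := neg_abs_le d; rw [habsD] at hd1; linarith
    have hd : 0 ≤ d := by nlinarith
    obtain ⟨h1, h2, h3⟩ := fiber_aux hC hr1 hr2 hD hd hdle
    rw [habsD, abs_of_nonneg h3]
    exact ⟨h1, h2⟩
  · have habsD : |D| = -D := abs_of_nonpos hD
    have hdle : d ≤ -D := le_trans (le_abs_self d) (by rw [habsD] at hd1; exact hd1)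
    have hdge : D ≤ d := by
      have := neg_abs_le d; rw [habsD] at hd1; linarith
    have hd : d ≤ 0 := by nlinarith
    obtain ⟨h1, h2, h3⟩ := fiber_aux hC hr1 hr2 (by linarith : (0:ℝ) ≤ -D)
      (by linarith : (0:ℝ) ≤ -d) (by linarith)
    have he : -D + (r-1)*(-d) = -(D + (r-1)*d) := by ring
    rw [he] at h1 h2 h3
    rw [habsD, abs_of_nonpos (by linarith)]
    constructor <;> linarith

lemma phi_bound {C r r' a a' y : ℝ} (hC : 1 ≤ C)
    (hr1 : 1/C ≤ r) (hr2 : r ≤ C) (hr1' : 1/C ≤ r') (hr2' : r' ≤ C) :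
    |(r - 1) * mclamp a y - (r' - 1) * mclamp a' y| ≤
      2*C*|a - a'| + |r*a - r'*a'| := by
  have hC0 : (0:ℝ) < C := by linarith
  have hCinv : (0:ℝ) < 1/C := by positivity
  have hrabs : |r - 1| ≤ C := abs_le.mpr ⟨by linarith, by linarith⟩
  have hr'abs : |r| ≤ C := abs_le.mpr ⟨by linarith, hr2⟩
  have key : (r-1) * mclamp a y - (r'-1) * mclamp a' y =
      (r-1) * (mclamp a y - mclamp a' y) + (r - r') * mclamp a' y := by ring
  rw [key]
  refine le_trans (abs_add_le _ _) ?_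
  rw [abs_mul, abs_mul]
  have b1 : |r - 1| * |mclamp a y - mclamp a' y| ≤ C * |a - a'| :=
    mul_le_mul hrabs (mclamp_lip_a a a' y) (abs_nonneg _) (le_of_lt hC0)
  have b2 : |r - r'| * |mclamp a' y| ≤ C * |a - a'| + |r*a - r'*a'| := by
    have s1 : |r - r'| * |mclamp a' y| ≤ |r - r'| * |a'| :=
      mul_le_mul_of_nonneg_left (mclamp_abs_le a' y) (abs_nonneg _)
    have s2 : |r - r'| * |a'| = |r*a' - r'*a'| := by rw [← abs_mul]; ring_nf
    have s3 : |r*a' - r'*a'| ≤ |r| * |a - a'| + |r*a - r'*a'| := by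
      have he : r*a' - r'*a' = r*(a' - a) + (r*a - r'*a') := by ring
      rw [he]
      refine le_trans (abs_add_le _ _) ?_
      rw [abs_mul, abs_sub_comm a' a]
    have s4 : |r| * |a - a'| ≤ C * |a - a'| :=
      mul_le_mul_of_nonneg_right hr'abs (abs_nonneg _)
    linarith
  linarith

/-- If `f` and `g` are multigerms of Lipschitz functions `(ℝ²,0) → (ℝ,0)` and
there are a bi-Lipschitz homeomorphism germ `h` of `(ℝ²,0)` and `C ≥ 1` such that, for each
`j` and all `p` near `0`, `f_j(p)·g_j(h(p)) ≥ 0` and `(1/C)·|f_j(p)| ≤ |g_j(h(p))| ≤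
C·|f_j(p)|`, then `f` and `g` are multi-𝒦-Lipschitz equivalent with common factor `h`. -/
theorem stmt4 (n : ℕ) (f g : Fin n → ℝ × ℝ → ℝ)
    (hfLip : ∀ j, ∃ K : NNReal, ∃ U ∈ nhds (0 : ℝ × ℝ), LipschitzOnWith K (f j) U)
    (hgLip : ∀ j, ∃ K : NNReal, ∃ U ∈ nhds (0 : ℝ × ℝ), LipschitzOnWith K (g j) U)
    (hf0 : ∀ j, f j 0 = 0) (hg0 : ∀ j, g j 0 = 0)
    (h : ℝ × ℝ → ℝ × ℝ) (U V : Set (ℝ × ℝ)) (C₀ : ℝ)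
    (hh : IsBiLipGermAt0 h U V C₀)
    (C : ℝ) (hC : 1 ≤ C)
    (hcomp : ∀ j, ∀ᶠ p in nhds (0 : ℝ × ℝ),
      0 ≤ f j p * g j (h p) ∧
      (1 / C) * |f j p| ≤ |g j (h p)| ∧ |g j (h p)| ≤ C * |f j p|) :
    ∃ Ht : Fin n → ℝ × ℝ → ℝ → ℝ,
      (∀ᶠ p in nhds (0 : ℝ × ℝ), ∀ j, Ht j p 0 = 0) ∧
      (∃ (W X : Set ((ℝ × ℝ) × (Fin n → ℝ))) (C' : ℝ),
        IsBiLipGermAt0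
          (fun q : (ℝ × ℝ) × (Fin n → ℝ) => (h q.1, fun j => Ht j q.1 (q.2 j))) W X C') ∧
      (∀ᶠ p in nhds (0 : ℝ × ℝ), ∀ j, Ht j p (f j p) = g j (h p)) := by
  classical
  obtain ⟨hU, hV, h0, hbij, hC₀1, hhlip⟩ := hh
  have hC₀0 : (0:ℝ) < C₀ := by linarith
  have hC0 : (0:ℝ) < C := by linarith
  have h0U : (0 : ℝ×ℝ) ∈ U := mem_of_mem_nhds hU
  choose Kf Uf hUf hKf using hfLip
  choose Kg Ug hUg hKg using hgLip
  -- continuity of h at 0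
  have hcont : Tendsto h (nhds (0:ℝ×ℝ)) (nhds (0:ℝ×ℝ)) := by
    have hb : ∀ᶠ p in nhds (0:ℝ×ℝ), ‖h p‖ ≤ C₀ * ‖p‖ := by
      filter_upwards [hU] with p hp
      have := (hhlip p hp 0 h0U).2
      simpa [h0] using this
    have hn : Tendsto (fun p : ℝ×ℝ => ‖h p‖) (nhds 0) (nhds 0) := by
      have hg' : Tendsto (fun p : ℝ×ℝ => C₀ * ‖p‖) (nhds 0) (nhds 0) := by
        simpa using (tendsto_norm_zero.const_mul C₀)
      exact squeeze_zero' (Eventually.of_forall fun p => norm_nonneg _) hb hg'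
    exact tendsto_zero_iff_norm_tendsto_zero.mpr hn
  set rr : Fin n → ℝ×ℝ → ℝ := fun j p => if f j p = 0 then 1 else g j (h p) / f j p
    with hrr_def
  -- key range facts
  have hrange : ∀ p, (∀ j, 0 ≤ f j p * g j (h p) ∧
      (1/C)*|f j p| ≤ |g j (h p)| ∧ |g j (h p)| ≤ C*|f j p|) →
      ∀ j, 1/C ≤ rr j p ∧ rr j p ≤ C ∧ g j (h p) = rr j p * f j p := by
    intro p hp j
    obtain ⟨hsign, hlow, hupp⟩ := hp j
    have hCinv1 : (1:ℝ)/C ≤ 1 := by rw [div_le_one hC0]; exact hC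
    by_cases hfz : f j p = 0
    · have hg0' : g j (h p) = 0 := by
        rw [hfz] at hupp; simpa using hupp
      simp only [hrr_def, if_pos hfz]
      exact ⟨hCinv1, hC, by rw [hg0', hfz]; ring⟩
    · have hfabs : 0 < |f j p| := abs_pos.mpr hfz
      have hr0 : 0 ≤ rr j p := by
        simp only [hrr_def, if_neg hfz]
        have he : g j (h p) / f j p = (f j p * g j (h p)) / (f j p)^2 := by
          field_simp
        rw [he]
        exact div_nonneg hsign (sq_nonneg _)
      have hb1 : |rr j p| ≤ C := by
        simp only [hrr_def, if_neg hfz, abs_div]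
        rw [div_le_iff₀ hfabs]; linarith
      have hb2 : 1/C ≤ |rr j p| := by
        simp only [hrr_def, if_neg hfz, abs_div]
        rw [le_div_iff₀ hfabs]; linarith
      have habseq : |rr j p| = rr j p := abs_of_nonneg hr0
      refine ⟨by rw [← habseq]; exact hb2, by rw [← habseq]; exact hb1, ?_⟩
      simp only [hrr_def, if_neg hfz]
      field_simp
  have hcompAll : ∀ᶠ p in nhds (0:ℝ×ℝ), ∀ j, 0 ≤ f j p * g j (h p) ∧
      (1/C)*|f j p| ≤ |g j (h p)| ∧ |g j (h p)| ≤ C*|f j p| :=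
    eventually_all.mpr hcomp
  refine ⟨fun j p y => y + (rr j p - 1) * mclamp (f j p) y, ?_, ?_, ?_⟩
  · exact Eventually.of_forall fun p j => by
      show (0:ℝ) + (rr j p - 1) * mclamp (f j p) 0 = 0
      rw [mclamp_zero]; ring
  · -- the bi-Lipschitz part
    -- assemble neighborhood U'
    have hUfAll : (⋂ j, Uf j) ∈ nhds (0:ℝ×ℝ) := by
      rw [Filter.iInter_mem]; exact hUf
    have hUgAll : (⋂ j, Ug j) ∈ nhds (0:ℝ×ℝ) := by
      rw [Filter.iInter_mem]; exact hUg
    set S : Set (ℝ×ℝ) := {p | ∀ j, 0 ≤ f j p * g j (h p) ∧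
      (1/C)*|f j p| ≤ |g j (h p)| ∧ |g j (h p)| ≤ C*|f j p|} with hS_def
    have hS : S ∈ nhds (0:ℝ×ℝ) := hcompAll
    set U' : Set (ℝ×ℝ) := U ∩ S ∩ (⋂ j, Uf j) ∩ h ⁻¹' (⋂ j, Ug j) with hU'_def
    have hU' : U' ∈ nhds (0:ℝ×ℝ) :=
      inter_mem (inter_mem (inter_mem hU hS) hUfAll) (hcont hUgAll)
    -- constants
    set Mf : ℝ := ((Finset.univ.sup Kf : NNReal) : ℝ) with hMf_def
    set Mg : ℝ := ((Finset.univ.sup Kg : NNReal) : ℝ) with hMg_def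
    have hMf0 : 0 ≤ Mf := (Finset.univ.sup Kf).coe_nonneg
    have hMg0 : 0 ≤ Mg := (Finset.univ.sup Kg).coe_nonneg
    have hMfj : ∀ j, (Kf j : ℝ) ≤ Mf := fun j =>
      NNReal.coe_le_coe.mpr (Finset.le_sup (Finset.mem_univ j))
    have hMgj : ∀ j, (Kg j : ℝ) ≤ Mg := fun j =>
      NNReal.coe_le_coe.mpr (Finset.le_sup (Finset.mem_univ j))
    set M : ℝ := 2*C*Mf + Mg*C₀ with hM_def
    have hM0 : 0 ≤ M := by positivity
    set C' : ℝ := C₀ + C + M + C*(M*C₀) with hC'_def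
    have hC'1 : 1 ≤ C' := by
      have h1 : 0 ≤ C*(M*C₀) := by positivity
      simp only [hC'_def]; linarith
    have hC'0 : (0:ℝ) < C' := by linarith
    have hUp : ∀ p ∈ U', p ∈ U ∧
        (∀ j, 1/C ≤ rr j p ∧ rr j p ≤ C ∧ g j (h p) = rr j p * f j p) ∧
        (∀ j, p ∈ Uf j) ∧ (∀ j, h p ∈ Ug j) := by
      intro p hp
      obtain ⟨⟨⟨hpU, hpS⟩, hpT⟩, hpP⟩ := hp
      exact ⟨hpU, hrange p hpS, fun j => mem_iInter.mp hpT j,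
        fun j => mem_iInter.mp (mem_preimage.mp hpP) j⟩
    have hkey : ∀ p ∈ U', ∀ p' ∈ U', ∀ y y' : Fin n → ℝ,
        ((1/C') * max ‖p - p'‖ ‖y - y'‖ ≤
          max ‖h p - h p'‖ ‖(fun j => y j + (rr j p - 1) * mclamp (f j p) (y j))
              - (fun j => y' j + (rr j p' - 1) * mclamp (f j p') (y' j))‖) ∧
        (max ‖h p - h p'‖ ‖(fun j => y j + (rr j p - 1) * mclamp (f j p) (y j))
              - (fun j => y' j + (rr j p' - 1) * mclamp (f j p') (y' j))‖
          ≤ C' * max ‖p - p'‖ ‖y - y'‖) := by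
      intro p hp p' hp' y y'
      obtain ⟨hpU, hpR, hpT, hpP⟩ := hUp p hp
      obtain ⟨hp'U, hp'R, hp'T, hp'P⟩ := hUp p' hp'
      have hhb := hhlip p hpU p' hp'U
      have hfa : ∀ j, |f j p - f j p'| ≤ Mf * ‖p - p'‖ := by
        intro j
        have h1 := (hKf j).dist_le_mul p (hpT j) p' (hp'T j)
        rw [Real.dist_eq, dist_eq_norm] at h1
        exact le_trans h1 (mul_le_mul_of_nonneg_right (hMfj j) (norm_nonneg _))
      have hgb : ∀ j, |g j (h p) - g j (h p')| ≤ Mg * C₀ * ‖p - p'‖ := by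
        intro j
        have h1 := (hKg j).dist_le_mul (h p) (hpP j) (h p') (hp'P j)
        rw [Real.dist_eq, dist_eq_norm] at h1
        calc |g j (h p) - g j (h p')| ≤ (Kg j : ℝ) * ‖h p - h p'‖ := h1
          _ ≤ Mg * (C₀ * ‖p - p'‖) := mul_le_mul (hMgj j) hhb.2 (norm_nonneg _) hMg0
          _ = Mg * C₀ * ‖p - p'‖ := by ring
      have hA : ∀ j, (1/C) * |y j - y' j| ≤
          |(y j - y' j) + (rr j p - 1)*(mclamp (f j p) (y j) - mclamp (f j p) (y' j))| ∧
          |(y j - y' j) + (rr j p - 1)*(mclamp (f j p) (y j) - mclamp (f j p) (y' j))|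
            ≤ C * |y j - y' j| :=
        fun j => fiber_bounds hC (hpR j).1 (hpR j).2.1 (mclamp_mono _ _ _) (mclamp_lip_y _ _ _)
      have hB : ∀ j, |(rr j p - 1) * mclamp (f j p) (y' j)
          - (rr j p' - 1) * mclamp (f j p') (y' j)| ≤ M * ‖p - p'‖ := by
        intro j
        have h1 := phi_bound (a := f j p) (a' := f j p') (y := y' j) hC
          (hpR j).1 (hpR j).2.1 (hp'R j).1 (hp'R j).2.1
        rw [← (hpR j).2.2, ← (hp'R j).2.2] at h1
        have h4 : 2*C*|f j p - f j p'| ≤ 2*C*(Mf * ‖p - p'‖) :=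
          mul_le_mul_of_nonneg_left (hfa j) (by positivity)
        have h3 := hgb j
        calc |(rr j p - 1) * mclamp (f j p) (y' j)
            - (rr j p' - 1) * mclamp (f j p') (y' j)|
            ≤ 2*C*|f j p - f j p'| + |g j (h p) - g j (h p')| := h1
          _ ≤ 2*C*(Mf*‖p-p'‖) + Mg*C₀*‖p-p'‖ := by linarith
          _ = M * ‖p - p'‖ := by rw [hM_def]; ring
      set TD : Fin n → ℝ := (fun j => y j + (rr j p - 1) * mclamp (f j p) (y j))
              - (fun j => y' j + (rr j p' - 1) * mclamp (f j p') (y' j)) with hTD_def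
      have hTDj : ∀ j, TD j = (y j + (rr j p - 1)*mclamp (f j p) (y j))
          - (y' j + (rr j p' - 1)*mclamp (f j p') (y' j)) := fun j => rfl
      have hyj : ∀ j, |y j - y' j| ≤ ‖y - y'‖ := by
        intro j
        have h1 := norm_le_pi_norm (y - y') j
        simpa [Real.norm_eq_abs] using h1
      have hTup : ∀ j, |TD j| ≤ C * ‖y - y'‖ + M * ‖p - p'‖ := by
        intro j
        have hde : TD j = ((y j - y' j)
            + (rr j p - 1)*(mclamp (f j p) (y j) - mclamp (f j p) (y' j)))
            + ((rr j p - 1) * mclamp (f j p) (y' j)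
            - (rr j p' - 1) * mclamp (f j p') (y' j)) := by rw [hTDj j]; ring
        rw [hde]
        refine le_trans (abs_add_le _ _) ?_
        have h1 := (hA j).2
        have h2 := hB j
        have h3 : C * |y j - y' j| ≤ C * ‖y - y'‖ :=
          mul_le_mul_of_nonneg_left (hyj j) (le_of_lt hC0)
        linarith
      have hTnorm_up : ‖TD‖ ≤ C * ‖y - y'‖ + M * ‖p - p'‖ := by
        refine pi_norm_le_iff_of_nonneg (by positivity) |>.mpr fun j => ?_
        simpa [Real.norm_eq_abs] using hTup j
      have hTlow : ∀ j, |y j - y' j| ≤ C * |TD j| + C * (M * ‖p - p'‖) := by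
        intro j
        have h1 := (hA j).1
        have h2 := hB j
        have h3 : |(y j - y' j)
            + (rr j p - 1)*(mclamp (f j p) (y j) - mclamp (f j p) (y' j))|
            ≤ |TD j| + M * ‖p - p'‖ := by
          have he : (y j - y' j)
              + (rr j p - 1)*(mclamp (f j p) (y j) - mclamp (f j p) (y' j))
              = TD j - ((rr j p - 1) * mclamp (f j p) (y' j)
              - (rr j p' - 1) * mclamp (f j p') (y' j)) := by rw [hTDj j]; ring
          rw [he]
          refine le_trans (abs_sub _ _) ?_
          linarith
        have h4 : (1/C) * |y j - y' j| ≤ |TD j| + M * ‖p - p'‖ := le_trans h1 h3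
        have h5 : |y j - y' j| = C * ((1/C) * |y j - y' j|) := by field_simp
        rw [h5]
        calc C * ((1/C) * |y j - y' j|) ≤ C * (|TD j| + M * ‖p - p'‖) :=
            mul_le_mul_of_nonneg_left h4 (le_of_lt hC0)
          _ = C * |TD j| + C * (M * ‖p - p'‖) := by ring
      set N : ℝ := max ‖h p - h p'‖ ‖TD‖ with hN_def
      have hN0 : 0 ≤ N := le_trans (norm_nonneg _) (le_max_left _ _)
      have hpdiff : ‖p - p'‖ ≤ C₀ * N := by
        have h1 : (1/C₀) * ‖p - p'‖ ≤ ‖h p - h p'‖ := hhb.1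
        have h2 : ‖h p - h p'‖ ≤ N := le_max_left _ _
        have h3 : ‖p - p'‖ = C₀ * ((1/C₀) * ‖p - p'‖) := by field_simp
        rw [h3]
        exact mul_le_mul_of_nonneg_left (le_trans h1 h2) (le_of_lt hC₀0)
      have hCC' : C₀ ≤ C' := by
        have h1 : 0 ≤ C*(M*C₀) := by positivity
        rw [hC'_def]; linarith
      have hMaxq0 : 0 ≤ max ‖p - p'‖ ‖y - y'‖ :=
        le_trans (norm_nonneg _) (le_max_left _ _)
      constructor
      · -- lower bound
        have hymax : ‖y - y'‖ ≤ (C + C*(M*C₀)) * N := by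
          refine pi_norm_le_iff_of_nonneg (by positivity) |>.mpr fun j => ?_
          have h1 := hTlow j
          have h2 : |TD j| ≤ ‖TD‖ := by
            simpa [Real.norm_eq_abs] using norm_le_pi_norm TD j
          have h3 : ‖TD‖ ≤ N := le_max_right _ _
          have h5 : C * |TD j| ≤ C * N :=
            mul_le_mul_of_nonneg_left (le_trans h2 h3) (le_of_lt hC0)
          have h6 : M * ‖p - p'‖ ≤ M * (C₀ * N) :=
            mul_le_mul_of_nonneg_left hpdiff hM0
          have h7 : C * (M * ‖p - p'‖) ≤ C * (M * (C₀ * N)) :=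
            mul_le_mul_of_nonneg_left h6 (le_of_lt hC0)
          simp only [Pi.sub_apply, Real.norm_eq_abs]
          calc |y j - y' j| ≤ C * |TD j| + C * (M * ‖p - p'‖) := h1
            _ ≤ C * N + C * (M * (C₀ * N)) := by linarith
            _ = (C + C*(M*C₀)) * N := by ring
        have hpmax : ‖p - p'‖ ≤ C' * N :=
          le_trans hpdiff (mul_le_mul_of_nonneg_right hCC' hN0)
        have hymax' : ‖y - y'‖ ≤ C' * N := by
          refine le_trans hymax (mul_le_mul_of_nonneg_right ?_ hN0)
          rw [hC'_def]; linarith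
        have hmax : max ‖p - p'‖ ‖y - y'‖ ≤ C' * N := max_le hpmax hymax'
        calc (1/C') * max ‖p - p'‖ ‖y - y'‖ ≤ (1/C') * (C' * N) :=
            mul_le_mul_of_nonneg_left hmax (by positivity)
          _ = N := by field_simp
      · -- upper bound
        refine max_le ?_ ?_
        · calc ‖h p - h p'‖ ≤ C₀ * ‖p - p'‖ := hhb.2
            _ ≤ C' * max ‖p - p'‖ ‖y - y'‖ :=
              mul_le_mul hCC' (le_max_left _ _) (norm_nonneg _) (le_of_lt hC'0)
        · have h1 : C * ‖y - y'‖ ≤ C * max ‖p - p'‖ ‖y - y'‖ :=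
            mul_le_mul_of_nonneg_left (le_max_right _ _) (le_of_lt hC0)
          have h2 : M * ‖p - p'‖ ≤ M * max ‖p - p'‖ ‖y - y'‖ :=
            mul_le_mul_of_nonneg_left (le_max_left _ _) hM0
          have h3 : (C + M) * max ‖p - p'‖ ‖y - y'‖ ≤ C' * max ‖p - p'‖ ‖y - y'‖ := by
            refine mul_le_mul_of_nonneg_right ?_ hMaxq0
            have h4 : 0 ≤ C*(M*C₀) := by positivity
            rw [hC'_def]; linarith
          calc ‖TD‖ ≤ C * ‖y - y'‖ + M * ‖p - p'‖ := hTnorm_up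
            _ ≤ (C + M) * max ‖p - p'‖ ‖y - y'‖ := by linarith
            _ ≤ C' * max ‖p - p'‖ ‖y - y'‖ := h3
    refine ⟨U' ×ˢ univ, (h '' U') ×ˢ univ, C', prod_mem_nhds hU' univ_mem, ?_, ?_, ?_, hC'1, ?_⟩
    · -- X ∈ nhds 0
      refine prod_mem_nhds ?_ univ_mem
      obtain ⟨ε, hε, hball⟩ := Metric.mem_nhds_iff.mp hU'
      have hmem : V ∩ Metric.ball 0 (ε / C₀) ∈ nhds (0:ℝ×ℝ) :=
        inter_mem hV (Metric.ball_mem_nhds _ (by positivity))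
      refine Filter.mem_of_superset hmem ?_
      rintro v ⟨hvV, hvb⟩
      obtain ⟨u, huU, hu⟩ := hbij.surjOn hvV
      refine ⟨u, hball ?_, hu⟩
      have hl := (hhlip u huU 0 h0U).1
      rw [h0, sub_zero, sub_zero, hu] at hl
      have hv : ‖v‖ < ε / C₀ := by
        simpa [Metric.mem_ball, dist_zero_right] using hvb
      have h5 : ‖u‖ ≤ C₀ * ‖v‖ := by
        have he : ‖u‖ = C₀ * ((1/C₀) * ‖u‖) := by field_simp
        rw [he]
        exact mul_le_mul_of_nonneg_left hl (le_of_lt hC₀0)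
      have h6 : C₀ * ‖v‖ < C₀ * (ε / C₀) := mul_lt_mul_of_pos_left hv hC₀0
      have h7 : C₀ * (ε / C₀) = ε := by field_simp
      simp only [Metric.mem_ball, dist_zero_right]
      linarith
    · -- F 0 = 0
      have : (fun j : Fin n => (0:ℝ) + (rr j 0 - 1) * mclamp (f j 0) ((0 : Fin n → ℝ) j))
          = (0 : Fin n → ℝ) := by
        funext j; simp [mclamp_zero]
      simp only [Prod.mk_eq_zero]
      exact ⟨h0, this⟩
    · -- BijOn
      refine ⟨?_, ?_, ?_⟩
      · -- MapsTo
        rintro ⟨p, y⟩ ⟨hp, -⟩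
        exact ⟨mem_image_of_mem h hp, mem_univ _⟩
      · -- InjOn
        rintro ⟨p, y⟩ ⟨hp, -⟩ ⟨p', y'⟩ ⟨hp', -⟩ heq
        have hk := (hkey p hp p' hp' y y').1
        have h1 : h p = h p' := congrArg Prod.fst heq
        have h2 : (fun j => y j + (rr j p - 1) * mclamp (f j p) (y j))
            = (fun j => y' j + (rr j p' - 1) * mclamp (f j p') (y' j)) :=
          congrArg Prod.snd heq
        rw [h1, h2, sub_self, sub_self, norm_zero, norm_zero] at hk
        simp only [max_self] at hk
        have h0m : 0 ≤ max ‖p - p'‖ ‖y - y'‖ :=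
          le_trans (norm_nonneg _) (le_max_left _ _)
        have h3 : max ‖p - p'‖ ‖y - y'‖ ≤ 0 := by
          have h4 := mul_le_mul_of_nonneg_left hk (le_of_lt hC'0)
          have h5 : C' * ((1/C') * max ‖p - p'‖ ‖y - y'‖)
              = max ‖p - p'‖ ‖y - y'‖ := by field_simp
          rw [h5] at h4
          linarith
        have h4 : ‖p - p'‖ = 0 :=
          le_antisymm (le_trans (le_max_left _ _) h3) (norm_nonneg _)
        have h5 : ‖y - y'‖ = 0 :=
          le_antisymm (le_trans (le_max_right _ _) h3) (norm_nonneg _)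
        have h6 : p = p' := sub_eq_zero.mp (norm_eq_zero.mp h4)
        have h7 : y = y' := sub_eq_zero.mp (norm_eq_zero.mp h5)
        rw [h6, h7]
      · -- SurjOn
        rintro ⟨v, z⟩ ⟨hv, -⟩
        obtain ⟨p, hp, rfl⟩ := hv
        have hsurj : ∀ j : Fin n, ∃ yj : ℝ,
            yj + (rr j p - 1) * mclamp (f j p) yj = z j := by
          intro j
          set r0 := rr j p with hr0_def
          set a0 := f j p with ha0_def
          set T : ℝ → ℝ := fun y => y + (r0 - 1) * mclamp a0 y with hT_def
          have hTc : Continuous T :=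
            continuous_id.add (continuous_const.mul (mclamp_cont a0))
          set E : ℝ := |r0 - 1| * |a0| with hE_def
          have hE : 0 ≤ E := mul_nonneg (abs_nonneg _) (abs_nonneg _)
          have hbd : ∀ y : ℝ, |(r0 - 1) * mclamp a0 y| ≤ E := by
            intro y
            rw [abs_mul]
            exact mul_le_mul_of_nonneg_left (mclamp_abs_le _ _) (abs_nonneg _)
          have h1 : T (z j - E) ≤ z j := by
            have h2 := (abs_le.mp (hbd (z j - E))).2
            show (z j - E) + (r0 - 1) * mclamp a0 (z j - E) ≤ z j
            linarith
          have h2 : z j ≤ T (z j + E) := by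
            have h3 := (abs_le.mp (hbd (z j + E))).1
            show z j ≤ (z j + E) + (r0 - 1) * mclamp a0 (z j + E)
            linarith
          have hIcc := intermediate_value_Icc
            (by linarith : z j - E ≤ z j + E) hTc.continuousOn
          obtain ⟨y, -, hy⟩ := hIcc ⟨h1, h2⟩
          exact ⟨y, hy⟩
        choose yy hyy using hsurj
        refine ⟨(p, yy), ⟨hp, mem_univ _⟩, ?_⟩
        show (h p, fun j => yy j + (rr j p - 1) * mclamp (f j p) (yy j)) = (h p, z)
        exact Prod.ext_iff.mpr ⟨rfl, funext fun j => hyy j⟩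
    · -- bilipschitz bounds
      rintro ⟨p, y⟩ ⟨hp, -⟩ ⟨p', y'⟩ ⟨hp', -⟩
      have hk := hkey p hp p' hp' y y'
      have hsub1 : ((p, y) : (ℝ×ℝ) × (Fin n → ℝ)) - (p', y') = (p - p', y - y') := rfl
      have hnorm1 : ‖((p, y) : (ℝ×ℝ) × (Fin n → ℝ)) - (p', y')‖
          = max ‖p - p'‖ ‖y - y'‖ := rfl
      have hnorm2 : ‖((h p, fun j => y j + (rr j p - 1) * mclamp (f j p) (y j))
            : (ℝ×ℝ) × (Fin n → ℝ))
          - (h p', fun j => y' j + (rr j p' - 1) * mclamp (f j p') (y' j))‖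
          = max ‖h p - h p'‖ ‖(fun j => y j + (rr j p - 1) * mclamp (f j p) (y j))
              - (fun j => y' j + (rr j p' - 1) * mclamp (f j p') (y' j))‖ := rfl
      constructor
      · show (1/C') * ‖((p, y) : (ℝ×ℝ) × (Fin n → ℝ)) - (p', y')‖ ≤ _
        rw [hnorm1]
        exact le_trans hk.1 (le_of_eq hnorm2.symm)
      · show _ ≤ C' * ‖((p, y) : (ℝ×ℝ) × (Fin n → ℝ)) - (p', y')‖
        rw [hnorm1]
        exact le_trans (le_of_eq hnorm2) hk.2
  · -- Ht p (f p) = g (h p)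
    filter_upwards [hcompAll] with p hp j
    have := (hrange p hp j).2.2
    rw [mclamp_self, this]; ring
end

section
/- There exists a germ at 0 of a bi-Lipschitz homeomorphism H of (ℝ³,0) that maps the germ at 0 of the curve Graph(f)={(x,x²,x³) : x ∈ ℝ} onto the germ at 0 of the curve Graph(g)={(x,x²,x⁵) : x ∈ ℝ}; i.e., there are ε, ε' > 0 with H({(x,x²,x³) : |x|<ε}) = {(x,x²,x⁵) : |x|<ε'} (so the one-variable multigerms f={x²,x³} and g={x²,x⁵} are 𝒦-bi-Lipschitz equivalent as map germs). -/
lemma philip (a b : ℝ) (ha : |a| < 1/4) (hb : |b| < 1/4) :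
    |(a^5 - a^3) - (b^5 - b^3)| ≤ (1/2) * |a - b| := by
  have h1 : (a^5 - a^3) - (b^5 - b^3)
      = (a-b) * (a^4+a^3*b+a^2*b^2+a*b^3+b^4 - a^2 - a*b - b^2) := by ring
  rw [h1, abs_mul, mul_comm]
  apply mul_le_mul_of_nonneg_right _ (abs_nonneg _)
  obtain ⟨ha1, ha2⟩ := abs_lt.mp ha
  obtain ⟨hb1, hb2⟩ := abs_lt.mp hb
  have ha' : a^2 ≤ 1/16 := by nlinarith
  have hb' : b^2 ≤ 1/16 := by nlinarith
  rw [abs_le]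
  constructor <;>
    nlinarith [sq_nonneg (a+b), sq_nonneg (a-b), sq_nonneg (a*b),
      mul_nonneg (by nlinarith : (0:ℝ) ≤ 1/16 - a^2) (by nlinarith : (0:ℝ) ≤ 1/16 - b^2),
      sq_nonneg (a^2 - b^2), sq_nonneg (a^2 + b^2), sq_nonneg (a*b - 1/16), sq_nonneg (a*b + 1/16),
      sq_nonneg ((a+b)*(a-b)), mul_nonneg (sq_nonneg (a+b)) (sq_nonneg (a-b))]

/-- There is a germ at 0 of a bi-Lipschitz homeomorphism `H` of `(ℝ³,0)`
mapping the germ at 0 of the curve `{(x,x²,x³)}` onto the germ at 0 of the curve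
`{(x,x²,x⁵)}`: there are `ε, ε' > 0` with
`H({(x,x²,x³) : |x| < ε}) = {(x,x²,x⁵) : |x| < ε'}`. -/
theorem stmt6 :
    ∃ (H : ℝ × ℝ × ℝ → ℝ × ℝ × ℝ) (U V : Set (ℝ × ℝ × ℝ)) (C : ℝ) (ε ε' : ℝ),
      IsBiLipGermAt0 H U V C ∧ 0 < ε ∧ 0 < ε' ∧
      {q : ℝ × ℝ × ℝ | ∃ x : ℝ, |x| < ε ∧ q = (x, x ^ 2, x ^ 3)} ⊆ U ∧
      H '' {q : ℝ × ℝ × ℝ | ∃ x : ℝ, |x| < ε ∧ q = (x, x ^ 2, x ^ 3)} =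
        {q : ℝ × ℝ × ℝ | ∃ x : ℝ, |x| < ε' ∧ q = (x, x ^ 2, x ^ 5)} := by
  set H : ℝ × ℝ × ℝ → ℝ × ℝ × ℝ :=
    fun p => (p.1, p.2.1, p.2.2 + (p.1 ^ 5 - p.1 ^ 3)) with hH
  set G : ℝ × ℝ × ℝ → ℝ × ℝ × ℝ :=
    fun p => (p.1, p.2.1, p.2.2 - (p.1 ^ 5 - p.1 ^ 3)) with hG
  have hGH : ∀ p, G (H p) = p := by intro p; simp [hH, hG]
  have hHG : ∀ p, H (G p) = p := by intro p; simp [hH, hG]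
  set U : Set (ℝ × ℝ × ℝ) := {p | |p.1| < 1/4} with hU
  have hUopen : IsOpen U := by
    have : U = (fun p : ℝ × ℝ × ℝ => p.1) ⁻¹' (Set.Ioo (-(1/4)) (1/4)) := by
      ext p; simp [hU, abs_lt]
    rw [this]
    exact (isOpen_Ioo).preimage continuous_fst
  have h0U : (0 : ℝ × ℝ × ℝ) ∈ U := by simp [hU]
  refine ⟨H, U, H '' U, 2, 1/8, 1/8, ?_, by norm_num, by norm_num, ?_, ?_⟩
  · refine ⟨hUopen.mem_nhds h0U, ?_, by simp [hH], ?_, by norm_num, ?_⟩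
    · -- H '' U ∈ nhds 0
      have himg : H '' U = G ⁻¹' U := by
        ext p
        constructor
        · rintro ⟨u, hu, rfl⟩; simpa [hGH] using hu
        · intro hp; exact ⟨G p, hp, hHG p⟩
      rw [himg]
      have hGc : Continuous G := by
        rw [hG]; fun_prop
      refine (hUopen.preimage hGc).mem_nhds ?_
      simp [hG, hU]
    · -- BijOn
      refine ⟨Set.mapsTo_image _ _, ?_, Set.surjOn_image _ _⟩
      intro p _ q _ h
      have := congrArg G h
      rwa [hGH, hGH] at this
    · -- bi-Lipschitz estimates
      intro p hp q hq
      have hphi := philip p.1 q.1 hp hq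
      have hnorm : ∀ r : ℝ × ℝ × ℝ, ‖r‖ = max |r.1| (max |r.2.1| |r.2.2|) := by
        intro r; simp [Prod.norm_def, Real.norm_eq_abs]
      have hd1 : |p.1 - q.1| ≤ ‖p - q‖ := by
        rw [hnorm]; exact le_max_left _ _
      have hd2 : |p.2.1 - q.2.1| ≤ ‖p - q‖ := by
        rw [hnorm]; exact le_trans (le_max_left _ _) (le_max_right _ _)
      have hd3 : |p.2.2 - q.2.2| ≤ ‖p - q‖ := by
        rw [hnorm]; exact le_trans (le_max_right _ _) (le_max_right _ _)
      have hHd : H p - H q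
          = (p.1 - q.1, p.2.1 - q.2.1,
             (p.2.2 - q.2.2) + ((p.1^5 - p.1^3) - (q.1^5 - q.1^3))) := by
        simp [hH, Prod.ext_iff]; try ring
      have hphi' : |(p.1^5 - p.1^3) - (q.1^5 - q.1^3)| ≤ (1/2) * ‖p - q‖ := by
        refine hphi.trans ?_
        have : (0:ℝ) ≤ 1/2 := by norm_num
        nlinarith [hd1]
      constructor
      · -- lower bound
        have hcase : ‖p - q‖ = max |p.1 - q.1| (max |p.2.1 - q.2.1| |p.2.2 - q.2.2|) := by
          have h : p - q = (p.1 - q.1, p.2.1 - q.2.1, p.2.2 - q.2.2) := by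
            simp [Prod.ext_iff]
          rw [h, hnorm]
        set M := max |p.1 - q.1|
          (max |p.2.1 - q.2.1| |(p.2.2 - q.2.2) + ((p.1^5 - p.1^3) - (q.1^5 - q.1^3))|)
          with hM
        have hRHS : ‖H p - H q‖ = M := by rw [hHd, hnorm]
        rw [hRHS]
        have hM1 : |p.1 - q.1| ≤ M := le_max_left _ _
        have hM2 : |p.2.1 - q.2.1| ≤ M := le_trans (le_max_left _ _) (le_max_right _ _)
        have hM3 : |p.2.2 - q.2.2| ≤ M + (1/2) * ‖p - q‖ := by
          have h4 : |p.2.2 - q.2.2|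
              ≤ |(p.2.2 - q.2.2) + ((p.1^5 - p.1^3) - (q.1^5 - q.1^3))|
                + |(p.1^5 - p.1^3) - (q.1^5 - q.1^3)| := by
            have h6 := abs_sub_abs_le_abs_sub (p.2.2 - q.2.2)
              ((p.2.2 - q.2.2) + ((p.1^5 - p.1^3) - (q.1^5 - q.1^3)))
            have h7 : p.2.2 - q.2.2 - ((p.2.2 - q.2.2) + ((p.1^5 - p.1^3) - (q.1^5 - q.1^3)))
                = -((p.1^5 - p.1^3) - (q.1^5 - q.1^3)) := by ring
            rw [h7, abs_neg] at h6
            linarith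
          have h5 : |(p.2.2 - q.2.2) + ((p.1^5 - p.1^3) - (q.1^5 - q.1^3))| ≤ M :=
            le_trans (le_max_right _ _) (le_max_right _ _)
          linarith [hphi']
        have hfin : ‖p - q‖ ≤ M + (1/2) * ‖p - q‖ := by
          rw [hcase]
          refine max_le (by linarith [norm_nonneg (p - q)]) (max_le ?_ ?_)
          · linarith [norm_nonneg (p - q)]
          · exact hM3
        linarith
      · -- upper bound
        have hRHS : ‖H p - H q‖ = max |p.1 - q.1| (max |p.2.1 - q.2.1|
            |(p.2.2 - q.2.2) + ((p.1^5 - p.1^3) - (q.1^5 - q.1^3))|) := by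
          rw [hHd, hnorm]
        rw [hRHS]
        have h3 : |(p.2.2 - q.2.2) + ((p.1^5 - p.1^3) - (q.1^5 - q.1^3))|
            ≤ (3/2) * ‖p - q‖ := by
          refine le_trans (abs_add_le _ _) ?_
          linarith [hd3, hphi']
        refine max_le ?_ (max_le ?_ ?_)
        · nlinarith [hd1, norm_nonneg (p - q)]
        · nlinarith [hd2, norm_nonneg (p - q)]
        · nlinarith [h3, norm_nonneg (p - q)]
  · -- curve ⊆ U
    rintro q ⟨x, hx, rfl⟩
    simp only [hU, Set.mem_setOf_eq]
    linarith
  · -- image equality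
    ext q
    constructor
    · rintro ⟨_, ⟨x, hx, rfl⟩, rfl⟩
      exact ⟨x, hx, by simp [hH, Prod.ext_iff]; try ring⟩
    · rintro ⟨x, hx, rfl⟩
      exact ⟨(x, x^2, x^3), ⟨x, hx, rfl⟩, by simp [hH, Prod.ext_iff]; try ring⟩
end

section
/- The one-variable multigerms f=(f_1,f_2) with f_1(x)=x², f_2(x)=x³ and g=(g_1,g_2) with g_1(x)=x², g_2(x)=x⁵ are not multi-𝒦-Lipschitz equivalent: there exist no ε>0, no germ at 0 of a bi-Lipschitz homeomorphism H of (ℝ×ℝ²,0) of the form H(x,y_1,y_2)=(h(x),H̃_1(x,y_1),H̃_2(x,y_2)) with h a germ at 0 of a bi-Lipschitz homeomorphism of (ℝ,0) and H̃_j(x,0)=0 for all x near 0, such that H(x,x²,x³)=(h(x),h(x)²,h(x)⁵) for all |x|<ε. -/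
/-- The one-variable multigerms `f = (x², x³)` and `g = (x², x⁵)` are not
multi-𝒦-Lipschitz equivalent: there is no bi-Lipschitz homeomorphism germ `H` of
`(ℝ×ℝ²,0)` of the triangular form `H(x,y₁,y₂) = (h x, H̃₁(x,y₁), H̃₂(x,y₂))` with `h` a
bi-Lipschitz homeomorphism germ of `(ℝ,0)`, `H̃_j(x,0) = 0` near `0`, and
`H(x,x²,x³) = (h x, (h x)², (h x)⁵)` for all `x` near `0`. -/
theorem stmt7 :
    ¬ ∃ (h : ℝ → ℝ) (H₁ H₂ : ℝ → ℝ → ℝ)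
        (Uh Vh : Set ℝ) (Ch : ℝ) (W X : Set (ℝ × ℝ × ℝ)) (C : ℝ) (ε : ℝ),
      IsBiLipGermAt0 h Uh Vh Ch ∧
      IsBiLipGermAt0
        (fun q : ℝ × ℝ × ℝ => (h q.1, H₁ q.1 q.2.1, H₂ q.1 q.2.2)) W X C ∧
      (∀ᶠ x in nhds (0 : ℝ), H₁ x 0 = 0 ∧ H₂ x 0 = 0) ∧
      0 < ε ∧
      (∀ x : ℝ, |x| < ε →
        ((h x, H₁ x (x ^ 2), H₂ x (x ^ 3)) : ℝ × ℝ × ℝ) =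
          (h x, (h x) ^ 2, (h x) ^ 5)) := by
  rintro ⟨h, H₁, H₂, Uh, Vh, Ch, W, X, C, ε, ⟨hUh, _, h0, _, hCh1, hhlip⟩,
    ⟨hW, _, _, _, hC1, hHlip⟩, hH0, hε, heq⟩
  have hC0 : (0:ℝ) < C := lt_of_lt_of_le one_pos hC1
  have hCh0 : (0:ℝ) < Ch := lt_of_lt_of_le one_pos hCh1
  -- radii
  obtain ⟨r1, hr1, hr1sub⟩ := Metric.mem_nhds_iff.mp hUh
  obtain ⟨r2, hr2, hr2sub⟩ := Metric.mem_nhds_iff.mp hW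
  obtain ⟨r3, hr3, hr3sub⟩ := Metric.eventually_nhds_iff.mp hH0
  set δ : ℝ := min ε (min r1 (min r2 (min r3 (min 1 (1 / (C * Ch ^ 5))))))
  have hδ : 0 < δ := by
    refine lt_min hε (lt_min hr1 (lt_min hr2 (lt_min hr3 (lt_min one_pos ?_))))
    positivity
  set x : ℝ := δ / 2
  have hx0 : 0 < x := by positivity
  have hxδ : x < δ := by simp only [x]; linarith
  have hxε : x < ε := lt_of_lt_of_le hxδ (min_le_left _ _)
  have hxr1 : x < r1 := lt_of_lt_of_le hxδ (le_trans (min_le_right _ _) (min_le_left _ _))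
  have hxr2 : x < r2 := lt_of_lt_of_le hxδ
    (le_trans (min_le_right _ _) (le_trans (min_le_right _ _) (min_le_left _ _)))
  have hxr3 : x < r3 := lt_of_lt_of_le hxδ
    (le_trans (min_le_right _ _) (le_trans (min_le_right _ _)
      (le_trans (min_le_right _ _) (min_le_left _ _))))
  have hx1 : x < 1 := lt_of_lt_of_le hxδ
    (le_trans (min_le_right _ _) (le_trans (min_le_right _ _)
      (le_trans (min_le_right _ _) (le_trans (min_le_right _ _) (min_le_left _ _)))))
  have hxC : x < 1 / (C * Ch ^ 5) := lt_of_lt_of_le hxδ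
    (le_trans (min_le_right _ _) (le_trans (min_le_right _ _)
      (le_trans (min_le_right _ _) (le_trans (min_le_right _ _) (min_le_right _ _)))))
  have hxabs : |x| = x := abs_of_pos hx0
  -- memberships
  have hxUh : x ∈ Uh := hr1sub (by simpa [Metric.mem_ball, Real.dist_eq, hxabs] using hxr1)
  have h0Uh : (0:ℝ) ∈ Uh := mem_of_mem_nhds hUh
  have hx2 : x ^ 2 ≤ x := by nlinarith
  have hx3 : x ^ 3 ≤ x := by nlinarith
  have hx2n : (0:ℝ) ≤ x ^ 2 := by positivity
  have hx3n : (0:ℝ) ≤ x ^ 3 := by positivity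
  have hpW : ((x, x ^ 2, x ^ 3) : ℝ × ℝ × ℝ) ∈ W := by
    apply hr2sub
    simp only [Metric.mem_ball, dist_zero_right, Prod.norm_def, Real.norm_eq_abs]
    rw [hxabs, abs_of_nonneg hx2n, abs_of_nonneg hx3n]
    calc max x (max (x ^ 2) (x ^ 3)) ≤ x := by
          exact max_le le_rfl (max_le hx2 hx3)
      _ < r2 := hxr2
  have hqW : ((x, x ^ 2, 0) : ℝ × ℝ × ℝ) ∈ W := by
    apply hr2sub
    simp only [Metric.mem_ball, dist_zero_right, Prod.norm_def, Real.norm_eq_abs]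
    rw [hxabs, abs_of_nonneg hx2n, abs_zero]
    calc max x (max (x ^ 2) 0) ≤ x := max_le le_rfl (max_le hx2 hx0.le)
      _ < r2 := hxr2
  -- H₂ x 0 = 0
  have hH20 : H₂ x 0 = 0 :=
    (hr3sub (show dist x 0 < r3 by simpa [Real.dist_eq, hxabs] using hxr3)).2
  -- equations from heq
  have heqx := heq x (by rwa [hxabs])
  rw [Prod.mk.injEq, Prod.mk.injEq] at heqx
  obtain ⟨-, h1eq, h2eq⟩ := heqx
  -- |h x| ≤ Ch * x
  have hhx : |h x| ≤ Ch * x := by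
    have := (hhlip x hxUh 0 h0Uh).2
    simpa [h0, Real.norm_eq_abs, hxabs] using this
  -- lower Lipschitz bound
  have hlow := (hHlip _ hpW _ hqW).1
  have hdiff : (((x, x ^ 2, x ^ 3) : ℝ × ℝ × ℝ) - (x, x ^ 2, 0)) = (0, 0, x ^ 3) := by
    simp [Prod.ext_iff]
  rw [hdiff] at hlow
  simp only [h1eq, h2eq, hH20] at hlow
  have hnorm1 : ‖((0:ℝ), (0:ℝ), x ^ 3)‖ = x ^ 3 := by
    simp [Prod.norm_def, Real.norm_eq_abs, abs_pow, hxabs, hx3n]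
  have hFdiff : (((h x, h x ^ 2, h x ^ 5) : ℝ × ℝ × ℝ) - (h x, h x ^ 2, 0))
      = (0, 0, h x ^ 5) := by simp [Prod.ext_iff]
  rw [hFdiff, hnorm1] at hlow
  have hnorm2 : ‖((0:ℝ), (0:ℝ), h x ^ 5)‖ = |h x| ^ 5 := by
    simp [Prod.norm_def, abs_pow]
  rw [hnorm2] at hlow
  -- contradiction
  have h5 : |h x| ^ 5 ≤ (Ch * x) ^ 5 := by
    exact pow_le_pow_left₀ (abs_nonneg _) hhx 5
  have key : (1 / C) * x ^ 3 ≤ Ch ^ 5 * x ^ 5 := by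
    calc (1 / C) * x ^ 3 ≤ |h x| ^ 5 := hlow
      _ ≤ (Ch * x) ^ 5 := h5
      _ = Ch ^ 5 * x ^ 5 := by ring
  have hx2small : C * Ch ^ 5 * x ^ 2 < 1 := by
    have hCC : (0:ℝ) < C * Ch ^ 5 := by positivity
    have : x * (C * Ch ^ 5) < 1 := (lt_div_iff₀ hCC).mp hxC
    nlinarith
  rw [div_mul_eq_mul_div, one_mul, div_le_iff₀ hC0] at key
  nlinarith [mul_lt_mul_of_pos_right hx2small (pow_pos hx0 3)]
end

section
/- The multigerms f=(f_1,f_2) with f_1(x,y)=x²−y³, f_2(x,y)=y and g=(g_1,g_2) with g_1(x,y)=x³−y², g_2(x,y)=y on (ℝ²,0) are not multi-𝒦-Lipschitz equivalent: there exists no germ at 0 of a bi-Lipschitz homeomorphism H of (ℝ²×ℝ²,0) of the form H(p,y_1,y_2)=(h(p),H̃_1(p,y_1),H̃_2(p,y_2)) with h a germ at 0 of a bi-Lipschitz homeomorphism of (ℝ²,0) and H̃_j(p,0)=0 for all p near 0, such that H(p,f_1(p),f_2(p))=(h(p),g_1(h(p)),g_2(h(p))) for all p near 0. -/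
private lemma stmt9_aux (C C₀ s a b : ℝ) (hC : 1 ≤ C) (hC₀ : 1 ≤ C₀) (hs : 0 < s)
    (hsmall : C ^ 2 * C₀ ^ 3 * s ^ 2 < 1) (hcusp : a ^ 3 = b ^ 2)
    (hq1 : |a| ≤ C₀ * s ^ 2) (hq2 : 1 / C * s ^ 2 ≤ |b|) : False := by
  have hCpos : (0:ℝ) < C := lt_of_lt_of_le one_pos hC
  have hC₀pos : (0:ℝ) < C₀ := lt_of_lt_of_le one_pos hC₀
  have hann : 0 ≤ a := by
    by_contra hneg
    push_neg at hneg
    have := Odd.pow_neg (⟨1, by norm_num⟩ : Odd 3) hneg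
    nlinarith [sq_nonneg b]
  have hacube : a ^ 3 ≤ (C₀ * s ^ 2) ^ 3 :=
    pow_le_pow_left₀ hann (le_trans (le_abs_self _) hq1) 3
  have hbsq : (1 / C * s ^ 2) ^ 2 ≤ b ^ 2 := by
    rw [← sq_abs b]
    exact pow_le_pow_left₀ (by positivity) hq2 2
  have key : (1 / C * s ^ 2) ^ 2 ≤ (C₀ * s ^ 2) ^ 3 := by
    calc (1 / C * s ^ 2) ^ 2 ≤ b ^ 2 := hbsq
    _ = a ^ 3 := hcusp.symm
    _ ≤ (C₀ * s ^ 2) ^ 3 := hacube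
  have h1 : C ^ 2 * (1 / C * s ^ 2) ^ 2 = s ^ 4 := by
    field_simp
  have h2 : C ^ 2 * (1 / C * s ^ 2) ^ 2 ≤ C ^ 2 * (C₀ * s ^ 2) ^ 3 :=
    mul_le_mul_of_nonneg_left key (by positivity)
  rw [h1] at h2
  have h3 : C ^ 2 * (C₀ * s ^ 2) ^ 3 = (C ^ 2 * C₀ ^ 3 * s ^ 2) * s ^ 4 := by ring
  rw [h3] at h2
  nlinarith [pow_pos hs 4]



/-- The multigerms `f = (x² − y³, y)` and `g = (x³ − y², y)` on `(ℝ²,0)` are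
not multi-𝒦-Lipschitz equivalent: there is no bi-Lipschitz homeomorphism germ `H` of
`(ℝ²×ℝ²,0)` of the triangular form `H(p,y₁,y₂) = (h p, H̃₁(p,y₁), H̃₂(p,y₂))` with `h` a
bi-Lipschitz homeomorphism germ of `(ℝ²,0)`, `H̃_j(p,0) = 0` near `0`, and
`H(p, f₁ p, f₂ p) = (h p, g₁ (h p), g₂ (h p))` for all `p` near `0`. -/
theorem stmt9 :
    ¬ ∃ (h : ℝ × ℝ → ℝ × ℝ) (H₁ H₂ : ℝ × ℝ → ℝ → ℝ)
        (U V : Set (ℝ × ℝ)) (C₀ : ℝ)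
        (W X : Set ((ℝ × ℝ) × ℝ × ℝ)) (C : ℝ),
      IsBiLipGermAt0 h U V C₀ ∧
      IsBiLipGermAt0
        (fun q : (ℝ × ℝ) × ℝ × ℝ => (h q.1, H₁ q.1 q.2.1, H₂ q.1 q.2.2)) W X C ∧
      (∀ᶠ p in nhds (0 : ℝ × ℝ), H₁ p 0 = 0 ∧ H₂ p 0 = 0) ∧
      (∀ᶠ p in nhds (0 : ℝ × ℝ),
        ((h p, H₁ p (p.1 ^ 2 - p.2 ^ 3), H₂ p p.2) : (ℝ × ℝ) × ℝ × ℝ) =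
          (h p, (h p).1 ^ 3 - (h p).2 ^ 2, (h p).2)) := by
  rintro ⟨h, H₁, H₂, U, V, C₀, W, X, C, hbl1, hbl2, hzero, heq⟩
  obtain ⟨hU, -, h0, -, hC₀, hlip⟩ := hbl1
  obtain ⟨hW, -, -, -, hC, hHlip⟩ := hbl2
  obtain ⟨ε₁, hε₁, hball₁⟩ := Metric.mem_nhds_iff.mp hU
  obtain ⟨ε₂, hε₂, hball₂⟩ := Metric.mem_nhds_iff.mp hW
  obtain ⟨ε₃, hε₃, hball₃⟩ := Metric.eventually_nhds_iff.mp (hzero.and heq)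
  have hCpos : (0:ℝ) < C := lt_of_lt_of_le one_pos hC
  have hC₀pos : (0:ℝ) < C₀ := lt_of_lt_of_le one_pos hC₀
  set r : ℝ := min (min ε₁ ε₂) (min ε₃ (1 / (C ^ 2 * C₀ ^ 3 + 1))) with hr
  have hrpos : 0 < r := by
    refine lt_min (lt_min hε₁ hε₂) (lt_min hε₃ ?_)
    positivity
  set s : ℝ := min r 1 / 2 with hsdef
  have hs : 0 < s := by positivity
  have hs1 : s < 1 := by
    have : min r 1 ≤ 1 := min_le_right _ _
    simp only [hsdef]; linarith
  have hsr : s < r := by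
    have : min r 1 ≤ r := min_le_left _ _
    simp only [hsdef]; linarith
  have hs2r : s ^ 2 < r := by nlinarith
  have hs2ε₁ : s ^ 2 < ε₁ := lt_of_lt_of_le hs2r (le_trans (min_le_left _ _) (min_le_left _ _))
  have hs2ε₂ : s ^ 2 < ε₂ := lt_of_lt_of_le hs2r (le_trans (min_le_left _ _) (min_le_right _ _))
  have hs2ε₃ : s ^ 2 < ε₃ := lt_of_lt_of_le hs2r (le_trans (min_le_right _ _) (min_le_left _ _))
  have hsmall : C ^ 2 * C₀ ^ 3 * s ^ 2 < 1 := by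
    have h1 : s ^ 2 < 1 / (C ^ 2 * C₀ ^ 3 + 1) :=
      lt_of_lt_of_le hs2r (le_trans (min_le_right _ _) (min_le_right _ _))
    have h2 : (0:ℝ) < C ^ 2 * C₀ ^ 3 + 1 := by positivity
    rw [lt_div_iff₀ h2] at h1
    nlinarith [sq_nonneg s]
  set p : ℝ × ℝ := (s ^ 3, s ^ 2) with hp
  have hnp : ‖p‖ ≤ s ^ 2 := by
    rw [hp, Prod.norm_def]
    simp only [Real.norm_eq_abs]
    rw [abs_of_nonneg (by positivity), abs_of_nonneg (by positivity)]
    exact max_le (by nlinarith) le_rfl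
  have hpU : p ∈ U := hball₁ (by
    simp only [Metric.mem_ball, dist_zero_right]
    exact lt_of_le_of_lt hnp hs2ε₁)
  have hp3 : dist p (0 : ℝ × ℝ) < ε₃ := by
    rw [dist_zero_right]; exact lt_of_le_of_lt hnp hs2ε₃
  obtain ⟨⟨hH₁0, hH₂0⟩, heqp⟩ := hball₃ hp3
  set q : ℝ × ℝ := h p with hq
  -- from the equation: q.1 ^ 3 = q.2 ^ 2 and H₂ p (s^2) = q.2
  have hf1 : p.1 ^ 2 - p.2 ^ 3 = 0 := by rw [hp]; ring
  have heq1 := congrArg (fun z : (ℝ × ℝ) × ℝ × ℝ => z.2.1) heqp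
  have heq2 := congrArg (fun z : (ℝ × ℝ) × ℝ × ℝ => z.2.2) heqp
  simp only at heq1 heq2
  simp only [hf1] at heq1
  rw [hH₁0] at heq1
  have hcusp : q.1 ^ 3 = q.2 ^ 2 := by rw [hq]; linarith [heq1]
  have hH₂eq : H₂ p (s ^ 2) = q.2 := by rw [hq]; exact heq2
  -- lower bound on |q.2| from bi-Lipschitz of the big map
  set a : (ℝ × ℝ) × ℝ × ℝ := (p, (0, s ^ 2)) with ha
  set b : (ℝ × ℝ) × ℝ × ℝ := (p, (0, 0)) with hb
  have hna : ‖a‖ ≤ s ^ 2 := by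
    rw [ha, Prod.norm_def]
    refine max_le hnp ?_
    rw [Prod.norm_def]
    simp [abs_of_nonneg (sq_nonneg s)]
    positivity
  have hnb : ‖b‖ ≤ s ^ 2 := by
    rw [hb, Prod.norm_def]
    refine max_le hnp ?_
    simp
    positivity
  have haW : a ∈ W := hball₂ (by
    simp only [Metric.mem_ball, dist_zero_right]
    exact lt_of_le_of_lt hna hs2ε₂)
  have hbW : b ∈ W := hball₂ (by
    simp only [Metric.mem_ball, dist_zero_right]
    exact lt_of_le_of_lt hnb hs2ε₂)
  have hab : ‖a - b‖ = s ^ 2 := by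
    rw [ha, hb]
    show ‖((p - p : ℝ × ℝ), ((0:ℝ) - 0, s ^ 2 - 0))‖ = s ^ 2
    simp [Prod.norm_def, abs_of_nonneg (sq_nonneg s)]
    positivity
  have hFab : ‖(fun q : (ℝ × ℝ) × ℝ × ℝ => (h q.1, H₁ q.1 q.2.1, H₂ q.1 q.2.2)) a -
      (fun q : (ℝ × ℝ) × ℝ × ℝ => (h q.1, H₁ q.1 q.2.1, H₂ q.1 q.2.2)) b‖ = |H₂ p (s ^ 2)| := by
    simp only [ha, hb]
    show ‖((h p - h p : ℝ × ℝ), (H₁ p 0 - H₁ p 0, H₂ p (s ^ 2) - H₂ p 0))‖ = _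
    rw [hH₂0]
    simp [Prod.norm_def, abs_nonneg]
  have hlow := (hHlip a haW b hbW).1
  rw [hab, hFab, hH₂eq] at hlow
  -- upper bound on ‖q‖
  have h0U : (0 : ℝ × ℝ) ∈ U := mem_of_mem_nhds hU
  have hup := (hlip p hpU 0 h0U).2
  rw [h0, sub_zero, sub_zero] at hup
  have hq1 : |q.1| ≤ C₀ * s ^ 2 := by
    calc |q.1| ≤ ‖q‖ := by rw [hq]; exact norm_fst_le (h p)
    _ = ‖h p‖ := by rw [hq]
    _ ≤ C₀ * ‖p‖ := hup
    _ ≤ C₀ * s ^ 2 := by nlinarith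
  exact stmt9_aux C C₀ s q.1 q.2 hC hC₀ hs hsmall hcusp hq1 hlow
end
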